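/- arXiv:2411.04464 — 3 statements merged into one kernel-verified Lean document; each statement's English description precedes it below -/
import Mathlib

section
/- Let ℓ ≥ 1, R = 𝔽₂[X]/(X^ℓ-1), and A a free R-module with Hamming weight from the induced 𝔽₂-basis. Suppose ỹ, y ∈ A satisfy: there exist y' , u, v ∈ A with ỹ = y' + v, y' - y = (1+X)·u, |u| ≤ Δ₁, and for all 1 ≤ i ≤ t, |Σ_{j∈[0,i)} Xʲ·v| ≤ Δ₂. Then for every i ∈ ℕ, |Σ_{j∈[0,i)} Xʲ·(ỹ - y)| ≤ 2Δ₁ + ⌈i/t⌉·Δ₂. -/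
/-!
Over `𝔽₂` we have `ỹ - y = (1 + X) u + v`. The prefix sums of the shifts of `(1 + X) u`
telescope to `u + Xⁱ u`, of weight at most `2Δ₁`. Since `∑_{j < t + m} Xʲ v` is
`∑_{j < t} Xʲ v + Xᵗ ∑_{j < m} Xʲ v` and shifts preserve weight, the weights of the prefix sums
of `v` are subadditive with step `t`, so a prefix of length `i` costs at most `⌈i/t⌉ Δ₂`.
-/

/-- Multiplication by `X^k` on the free module `R^n`, `R = 𝔽₂[X]/(X^ℓ-1)`,
in coefficient coordinates: `(X^k · a)_{j,i} = a_{j, i-k}`. -/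
def shiftk (ℓ n : ℕ) (k : ℕ) (a : Fin n × ZMod ℓ → ZMod 2) : Fin n × ZMod ℓ → ZMod 2 :=
  fun p => a (p.1, p.2 - (k : ZMod ℓ))

open Finset

theorem hammingNorm_add_le {ι : Type*} [Fintype ι] {β : ι → Type*} [∀ i, AddZeroClass (β i)]
    [∀ i, DecidableEq (β i)] (a b : ∀ i, β i) :
    hammingNorm (a + b) ≤ hammingNorm a + hammingNorm b := by
  classical
  refine (card_le_card fun i hi => ?_).trans (card_union_le _ _)
  by_contra h
  simp_all

theorem le_div_mul_of_add_le {w : ℕ → ℕ} {t Δ : ℕ} (ht : 1 ≤ t) (h0 : w 0 = 0)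
    (hadd : ∀ m, w (t + m) ≤ w t + w m) (hw : ∀ i, 1 ≤ i → i ≤ t → w i ≤ Δ) (i : ℕ) :
    w i ≤ (i + t - 1) / t * Δ := by
  induction i using Nat.strong_induction_on with
  | _ i ih =>
  rcases Nat.eq_zero_or_pos i with rfl | hi
  · simp [h0]
  rcases le_or_gt i t with hle | hlt
  · have : 1 ≤ (i + t - 1) / t := (Nat.one_le_div_iff (by omega)).2 (by omega)
    exact (hw i hi hle).trans (Nat.le_mul_of_pos_left Δ this)
  · obtain ⟨m, rfl⟩ : ∃ m, i = t + m := ⟨i - t, by omega⟩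
    have hdiv : (t + m + t - 1) / t = (m + t - 1) / t + 1 := by
      rw [show t + m + t - 1 = m + t - 1 + t by omega, Nat.add_div_right _ (by omega)]
    calc w (t + m) ≤ w t + w m := hadd m
      _ ≤ Δ + (m + t - 1) / t * Δ := add_le_add (hw t ht le_rfl) (ih m (by omega))
      _ = (t + m + t - 1) / t * Δ := by rw [hdiv]; ring

section Shift

variable {ℓ n : ℕ}

theorem shiftk_add (k : ℕ) (a b : Fin n × ZMod ℓ → ZMod 2) :
    shiftk ℓ n k (a + b) = shiftk ℓ n k a + shiftk ℓ n k b := rfl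

theorem shiftk_zero (a : Fin n × ZMod ℓ → ZMod 2) : shiftk ℓ n 0 a = a := by
  funext p
  simp [shiftk]

theorem shiftk_shiftk (k j : ℕ) (a : Fin n × ZMod ℓ → ZMod 2) :
    shiftk ℓ n k (shiftk ℓ n j a) = shiftk ℓ n (k + j) a := by
  funext p
  simp [shiftk, sub_sub]

theorem shiftk_sum (k : ℕ) (s : Finset ℕ) (f : ℕ → Fin n × ZMod ℓ → ZMod 2) :
    shiftk ℓ n k (∑ j ∈ s, f j) = ∑ j ∈ s, shiftk ℓ n k (f j) := by
  funext p
  simp [shiftk, Finset.sum_apply]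

theorem hammingNorm_shiftk [NeZero ℓ] (k : ℕ) (a : Fin n × ZMod ℓ → ZMod 2) :
    hammingNorm (shiftk ℓ n k a) = hammingNorm a :=
  card_equiv ((Equiv.refl _).prodCongr (Equiv.subRight (k : ZMod ℓ)))
    fun _ => by simp only [mem_filter, mem_univ, true_and]; rfl

theorem sum_range_shiftk_add_shiftk_one (u : Fin n × ZMod ℓ → ZMod 2) (i : ℕ) :
    ∑ j ∈ range i, shiftk ℓ n j (u + shiftk ℓ n 1 u) = u + shiftk ℓ n i u := by
  have hneg : ∀ a : Fin n × ZMod ℓ → ZMod 2, -a = a :=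
    fun a => funext fun _ => ZMod.neg_eq_self_mod_two _
  simpa only [sub_eq_add_neg, hneg, ← shiftk_shiftk, shiftk_add, shiftk_zero, add_comm]
    using sum_range_sub (fun j => shiftk ℓ n j u) i

theorem sum_range_shiftk_add (t m : ℕ) (v : Fin n × ZMod ℓ → ZMod 2) :
    ∑ j ∈ range (t + m), shiftk ℓ n j v
      = ∑ j ∈ range t, shiftk ℓ n j v + shiftk ℓ n t (∑ j ∈ range m, shiftk ℓ n j v) := by
  simp only [sum_range_add, shiftk_sum, shiftk_shiftk]

theorem hammingNorm_sum_range_shiftk_le [NeZero ℓ] {t Δ : ℕ} (ht : 1 ≤ t)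
    (v : Fin n × ZMod ℓ → ZMod 2)
    (hv : ∀ i, 1 ≤ i → i ≤ t → hammingNorm (∑ j ∈ range i, shiftk ℓ n j v) ≤ Δ) (i : ℕ) :
    hammingNorm (∑ j ∈ range i, shiftk ℓ n j v) ≤ (i + t - 1) / t * Δ := by
  refine le_div_mul_of_add_le ht (by simp) (fun m => ?_) hv i
  rw [sum_range_shiftk_add, ← hammingNorm_shiftk t (∑ j ∈ range m, shiftk ℓ n j v)]
  exact hammingNorm_add_le _ _

end Shift

/-- if `ỹ = y' + v` with `y' - y = (1+X)u`, `|u| ≤ Δ₁`, and all prefix sums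
`∑_{j<i} Xʲ v` for `1 ≤ i ≤ t` of weight `≤ Δ₂`, then for every `i`,
`|∑_{j<i} Xʲ (ỹ - y)| ≤ 2Δ₁ + ⌈i/t⌉ Δ₂`.  (Here `⌈i/t⌉ = (i + t - 1)/t` since `t ≥ 1`.) -/
theorem stmt3 (ℓ : ℕ) [NeZero ℓ] {n : ℕ} (Δ₁ Δ₂ t : ℕ) (ht : 1 ≤ t)
    (yt y y' u v : Fin n × ZMod ℓ → ZMod 2)
    (hdecomp : yt = y' + v)
    (hcompat : y' - y = (fun p => u p + u (p.1, p.2 - 1)))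
    (hu : hammingNorm u ≤ Δ₁)
    (hv : ∀ i, 1 ≤ i → i ≤ t →
      hammingNorm (∑ j ∈ Finset.range i, shiftk ℓ n j v) ≤ Δ₂) :
    ∀ i : ℕ,
      hammingNorm (∑ j ∈ Finset.range i, shiftk ℓ n j (yt - y)) ≤
        2 * Δ₁ + ((i + t - 1) / t) * Δ₂ := by
  intro i
  have hdiff : yt - y = (u + shiftk ℓ n 1 u) + v := by
    have hone : (fun p => u p + u (p.1, p.2 - 1)) = u + shiftk ℓ n 1 u := by
      funext p
      simp [shiftk]
    rw [hdecomp, ← hone, ← hcompat]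
    abel
  have hsum : ∑ j ∈ range i, shiftk ℓ n j (yt - y)
      = (u + shiftk ℓ n i u) + ∑ j ∈ range i, shiftk ℓ n j v := by
    simp only [hdiff, shiftk_add _ (u + _), sum_add_distrib, sum_range_shiftk_add_shiftk_one]
  calc hammingNorm (∑ j ∈ range i, shiftk ℓ n j (yt - y))
      ≤ hammingNorm u + hammingNorm (shiftk ℓ n i u)
        + hammingNorm (∑ j ∈ range i, shiftk ℓ n j v) := by
        rw [hsum]
        exact (hammingNorm_add_le (u + shiftk ℓ n i u) _).trans
          (add_le_add_left (hammingNorm_add_le u (shiftk ℓ n i u)) _)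
    _ ≤ 2 * Δ₁ + (i + t - 1) / t * Δ₂ := by
        have hvi := hammingNorm_sum_range_shiftk_le ht v hv i
        rw [hammingNorm_shiftk]
        omega
end

section
/- Let A₁, A₀, B₁, B₀ be finite-dimensional 𝔽₂-vector spaces and ∂^A : A₁ → A₀, ∂^B : B₁ → B₀ linear maps. For the hypergraph product complex C₂ = A₁⊗B₁ → C₁ = (A₀⊗B₁)⊕(A₁⊗B₀) → C₀ = A₀⊗B₀ with the standard boundary maps, the dimension of the middle homology satisfies dim H₁(C) = dim H₁(A)·dim H₀(B) + dim H₀(A)·dim H₁(B), where H₁(A) = ker ∂^A, H₀(A) = A₀/im ∂^A, and similarly for B. -/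
open TensorProduct
open LinearMap

section Aux

variable {K : Type*} [Field K]
variable {A' A B' B : Type*}
  [AddCommGroup A'] [AddCommGroup A] [AddCommGroup B'] [AddCommGroup B]
  [Module K A'] [Module K A] [Module K B'] [Module K B]

lemma aux_inf (f : A' →ₗ[K] A) (g : B' →ₗ[K] B)
    (hf : Function.Injective f) :
    range (f.rTensor B) ⊓ range (g.lTensor A) = range (TensorProduct.map f g) := by
  apply le_antisymm
  · rintro x ⟨⟨y, rfl⟩, ⟨z, hz⟩⟩
    set q := (range g).mkQ with hq
    have h1 : q.lTensor A (f.rTensor B y) = 0 := by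
      rw [← hz, ← LinearMap.comp_apply, ← LinearMap.lTensor_comp]
      have hq0 : q ∘ₗ g = 0 := by
        ext b
        simp [hq, Submodule.Quotient.mk_eq_zero]
      rw [hq0, LinearMap.lTensor_zero, LinearMap.zero_apply]
    have h2 : f.rTensor _ (q.lTensor A' y) = 0 := by
      have c1 : (f.rTensor _).comp (q.lTensor A') = TensorProduct.map f q :=
        LinearMap.rTensor_comp_lTensor _ f q
      have c2 : (q.lTensor A).comp (f.rTensor B) = TensorProduct.map f q :=
        LinearMap.lTensor_comp_rTensor _ f q
      calc f.rTensor _ (q.lTensor A' y) = TensorProduct.map f q y := by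
            rw [← c1, LinearMap.comp_apply]
        _ = q.lTensor A (f.rTensor B y) := by rw [← c2, LinearMap.comp_apply]
        _ = 0 := h1
    have hinj : Function.Injective (f.rTensor (B ⧸ range g)) :=
      Module.Flat.rTensor_preserves_injective_linearMap f hf
    have h3 : q.lTensor A' y = 0 := by
      apply hinj
      rw [h2, map_zero]
    have hexact : Function.Exact (g.lTensor A') (q.lTensor A') :=
      Module.Flat.lTensor_exact A' (LinearMap.exact_map_mkQ_range g)
    obtain ⟨w, hw⟩ := (hexact y).mp h3
    refine ⟨w, ?_⟩
    rw [← LinearMap.rTensor_comp_lTensor _ f g, LinearMap.comp_apply, hw]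
  · apply le_inf
    · rw [← LinearMap.rTensor_comp_lTensor _ f g]
      exact LinearMap.range_comp_le_range _ _
    · rw [← LinearMap.lTensor_comp_rTensor _ f g]
      exact LinearMap.range_comp_le_range _ _

lemma aux_ker_rTensor (f : A' →ₗ[K] A) :
    ker (f.rTensor B) = range ((ker f).subtype.rTensor B) :=
  (LinearMap.exact_iff.mp
    (Module.Flat.rTensor_exact B (LinearMap.exact_subtype_ker_map f)))

lemma aux_ker_lTensor (g : B' →ₗ[K] B) :
    ker (g.lTensor A) = range ((ker g).subtype.lTensor A) :=
  (LinearMap.exact_iff.mp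
    (Module.Flat.lTensor_exact A (LinearMap.exact_subtype_ker_map g)))

lemma aux_range_lTensor (g : B' →ₗ[K] B) :
    range (g.lTensor A) = range ((range g).subtype.lTensor A) := by
  conv_lhs => rw [← LinearMap.subtype_comp_codRestrict (f := g) (range g)
    (fun b => LinearMap.mem_range_self g b)]
  rw [LinearMap.lTensor_comp, LinearMap.range_comp,
    LinearMap.range_eq_top.mpr (LinearMap.lTensor_surjective A g.surjective_rangeRestrict),
    Submodule.map_top]

lemma aux_range_rTensor (f : A' →ₗ[K] A) :
    range (f.rTensor B) = range ((range f).subtype.rTensor B) := by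
  conv_lhs => rw [← LinearMap.subtype_comp_codRestrict (f := f) (range f)
    (fun b => LinearMap.mem_range_self f b)]
  rw [LinearMap.rTensor_comp, LinearMap.range_comp,
    LinearMap.range_eq_top.mpr (LinearMap.rTensor_surjective B f.surjective_rangeRestrict),
    Submodule.map_top]

lemma aux_map_injective (f : A' →ₗ[K] A) (g : B' →ₗ[K] B)
    (hf : Function.Injective f) (hg : Function.Injective g) :
    Function.Injective (TensorProduct.map f g) := by
  rw [← LinearMap.rTensor_comp_lTensor _ f g, LinearMap.coe_comp]
  exact (Module.Flat.rTensor_preserves_injective_linearMap f hf).comp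
    (Module.Flat.lTensor_preserves_injective_linearMap g hg)

lemma aux_finrank_range_map [FiniteDimensional K A'] [FiniteDimensional K B']
    (f : A' →ₗ[K] A) (g : B' →ₗ[K] B)
    (hf : Function.Injective f) (hg : Function.Injective g) :
    Module.finrank K (range (TensorProduct.map f g)) =
      Module.finrank K A' * Module.finrank K B' := by
  rw [LinearMap.finrank_range_of_inj (aux_map_injective f g hf hg),
    Module.finrank_tensorProduct]

end Aux


set_option maxHeartbeats 1000000 in
/-- Künneth for 2-term complexes over 𝔽₂: for the hypergraph product complex,
`dim H₁(C) = dim H₁(A)·dim H₀(B) + dim H₀(A)·dim H₁(B)`, where `H₁(C) = ker ∂₁ / im ∂₂`,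
`H₁(A) = ker ∂^A`, `H₀(A) = A₀/im ∂^A`, and similarly for `B`. -/
theorem stmt6 {A₁ A₀ B₁ B₀ : Type}
    [AddCommGroup A₁] [AddCommGroup A₀] [AddCommGroup B₁] [AddCommGroup B₀]
    [Module (ZMod 2) A₁] [Module (ZMod 2) A₀] [Module (ZMod 2) B₁] [Module (ZMod 2) B₀]
    [FiniteDimensional (ZMod 2) A₁] [FiniteDimensional (ZMod 2) A₀]
    [FiniteDimensional (ZMod 2) B₁] [FiniteDimensional (ZMod 2) B₀]
    (dA : A₁ →ₗ[ZMod 2] A₀) (dB : B₁ →ₗ[ZMod 2] B₀) :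
    ∀ (bd₂ : A₁ ⊗[ZMod 2] B₁ →ₗ[ZMod 2] (A₀ ⊗[ZMod 2] B₁) × (A₁ ⊗[ZMod 2] B₀))
      (bd₁ : (A₀ ⊗[ZMod 2] B₁) × (A₁ ⊗[ZMod 2] B₀) →ₗ[ZMod 2] A₀ ⊗[ZMod 2] B₀),
      bd₂ = LinearMap.prod
          (TensorProduct.map dA (LinearMap.id : B₁ →ₗ[ZMod 2] B₁))
          (TensorProduct.map (LinearMap.id : A₁ →ₗ[ZMod 2] A₁) dB) →
      bd₁ = (TensorProduct.map (LinearMap.id : A₀ →ₗ[ZMod 2] A₀) dB).comp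
            (LinearMap.fst (ZMod 2) (A₀ ⊗[ZMod 2] B₁) (A₁ ⊗[ZMod 2] B₀))
          + (TensorProduct.map dA (LinearMap.id : B₀ →ₗ[ZMod 2] B₀)).comp
            (LinearMap.snd (ZMod 2) (A₀ ⊗[ZMod 2] B₁) (A₁ ⊗[ZMod 2] B₀)) →
      Module.finrank (ZMod 2)
          (↥(LinearMap.ker bd₁) ⧸
            Submodule.comap (LinearMap.ker bd₁).subtype (LinearMap.range bd₂))
        = Module.finrank (ZMod 2) (LinearMap.ker dA) *
            Module.finrank (ZMod 2) (B₀ ⧸ LinearMap.range dB)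
          + Module.finrank (ZMod 2) (A₀ ⧸ LinearMap.range dA) *
            Module.finrank (ZMod 2) (LinearMap.ker dB) := by
  intro bd₂ bd₁ h₂ h₁
  have hbd₂ : bd₂ = LinearMap.prod (dA.rTensor B₁) (dB.lTensor A₁) := h₂
  have hbd₁ : bd₁ = (dB.lTensor A₀).coprod (dA.rTensor B₀) := by
    rw [h₁]; ext x <;> rfl
  clear h₁ h₂
  subst hbd₁ hbd₂
  set K := ZMod 2
  set rA := Module.finrank K (range dA) with hrA
  set kA := Module.finrank K (ker dA) with hkA
  set qA := Module.finrank K (A₀ ⧸ range dA) with hqA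
  set rB := Module.finrank K (range dB) with hrB
  set kB := Module.finrank K (ker dB) with hkB
  set qB := Module.finrank K (B₀ ⧸ range dB) with hqB
  set bd₂ := LinearMap.prod (dA.rTensor B₁) (dB.lTensor A₁) with hbd₂
  set bd₁ := (dB.lTensor A₀).coprod (dA.rTensor B₀) with hbd₁
  have hA1 : rA + kA = Module.finrank K A₁ := dA.finrank_range_add_finrank_ker
  have hA0 : qA + rA = Module.finrank K A₀ := (range dA).finrank_quotient_add_finrank
  have hB1 : rB + kB = Module.finrank K B₁ := dB.finrank_range_add_finrank_ker
  have hB0 : qB + rB = Module.finrank K B₀ := (range dB).finrank_quotient_add_finrank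
  -- kernel of bd₂
  have hker2 : ker bd₂ = range (TensorProduct.map (ker dA).subtype (ker dB).subtype) := by
    rw [hbd₂, LinearMap.ker_prod, aux_ker_rTensor, aux_ker_lTensor,
      aux_inf _ _ (Submodule.injective_subtype _)]
  have hk2 : Module.finrank K (ker bd₂) = kA * kB := by
    rw [hker2, aux_finrank_range_map _ _ (Submodule.injective_subtype _)
      (Submodule.injective_subtype _)]
  -- rank-nullity for bd₂
  have e2 : Module.finrank K (range bd₂) + kA * kB =
      (rA + kA) * (rB + kB) := by
    rw [← hk2, bd₂.finrank_range_add_finrank_ker, Module.finrank_tensorProduct, hA1, hB1]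
  -- range of bd₁
  have e3 : Module.finrank K (range bd₁) + rA * rB =
      (qA + rA) * rB + rA * (qB + rB) := by
    have h1 : range bd₁ = range ((range dA).subtype.rTensor B₀) ⊔
        range ((range dB).subtype.lTensor A₀) := by
      rw [hbd₁, LinearMap.range_coprod, aux_range_lTensor, aux_range_rTensor, sup_comm]
    have h2 : range ((range dA).subtype.rTensor B₀) ⊓
        range ((range dB).subtype.lTensor A₀) =
        range (TensorProduct.map (range dA).subtype (range dB).subtype) :=
      aux_inf _ _ (Submodule.injective_subtype _)
    have h3 := Submodule.finrank_sup_add_finrank_inf_eq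
      (range ((range dA).subtype.rTensor B₀)) (range ((range dB).subtype.lTensor A₀))
    rw [h2, aux_finrank_range_map _ _ (Submodule.injective_subtype _)
        (Submodule.injective_subtype _)] at h3
    rw [h1, h3]
    rw [LinearMap.finrank_range_of_inj
        (Module.Flat.rTensor_preserves_injective_linearMap _ (Submodule.injective_subtype _)),
      LinearMap.finrank_range_of_inj
        (Module.Flat.lTensor_preserves_injective_linearMap _ (Submodule.injective_subtype _)),
      Module.finrank_tensorProduct, Module.finrank_tensorProduct, ← hA0, ← hB0]
    ring
  -- rank-nullity for bd₁
  have e1 : Module.finrank K (range bd₁) + Module.finrank K (ker bd₁) =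
      (qA + rA) * (rB + kB) + (rA + kA) * (qB + rB) := by
    rw [bd₁.finrank_range_add_finrank_ker, Module.finrank_prod,
      Module.finrank_tensorProduct, Module.finrank_tensorProduct, hA0, hA1, hB0, hB1]
  -- boundary condition: range bd₂ ≤ ker bd₁
  have hle : range bd₂ ≤ ker bd₁ := by
    rintro _ ⟨x, rfl⟩
    rw [LinearMap.mem_ker]
    have : bd₁ (bd₂ x) = (dB.lTensor A₀) ((dA.rTensor B₁) x)
        + (dA.rTensor B₀) ((dB.lTensor A₁) x) := rfl
    rw [this, ← LinearMap.comp_apply, ← LinearMap.comp_apply,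
      LinearMap.lTensor_comp_rTensor, LinearMap.rTensor_comp_lTensor,
      ← two_smul K, show (2 : K) = 0 from rfl, zero_smul]
  -- quotient dimension
  have e5 : Module.finrank K (Submodule.comap (ker bd₁).subtype (range bd₂)) =
      Module.finrank K (range bd₂) :=
    (Submodule.comapSubtypeEquivOfLe hle).finrank_eq
  have e4 := (Submodule.comap (ker bd₁).subtype (range bd₂)).finrank_quotient_add_finrank
  rw [e5] at e4
  -- arithmetic
  have G : Module.finrank K
      (↥(ker bd₁) ⧸ Submodule.comap (ker bd₁).subtype (range bd₂)) + Module.finrank K (range bd₂)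
      = Module.finrank K (ker bd₁) := e4
  nlinarith [e1, e2, e3, G]
end

section
/- Let G = (V,E) be a Δ-regular graph with spectral expansion λ(G) ≤ λ where λ < δ/16 for some δ > 0. Suppose S, T ⊆ V satisfy |S| ≤ λ|V|, |T| ≤ |S|/2, and every vertex v ∈ S \ T has W_G(v, S) ≥ δΔ/4. Then S is empty. Equivalently: if S is nonempty with |S| ≤ λ|V| and |T| ≤ |S|/2, then there exists v ∈ S \ T with W_G(v, S) < δΔ/4. -/
/-!
Count `W(S,S) = ∑_{v,u ∈ S} W v u` in two ways. Every vertex of `S \ T`, which holds at least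
half of `S`, contributes at least `δΔ/4`, so `W(S,S) ≥ (δ/8)Δ|S|`. On the other hand
`W(S,S) = Δ ⟨1_S, A 1_S⟩`. As `A 1 = 1` and every eigenvalue other than the top one is at most
`λ < 1` (the lower bound and `W(S,S) ≤ Δ|S|` force `δ ≤ 8`), the all-ones vector is a multiple
of the top eigenvector, so expanding `1_S` in an orthonormal eigenbasis gives the expander mixing
bound `⟨1_S, A 1_S⟩ ≤ (λ + |S|/|V|)|S| ≤ 2λ|S|`, which is smaller than `(δ/8)|S|` because `λ < δ/16`.
-/

open Matrix Finset

theorem Finset.card_div_two_mul_le_sum_of_le_on_sdiff {ι : Type*} [DecidableEq ι]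
    {S T : Finset ι} {f : ι → ℝ} {c : ℝ} (hc : 0 ≤ c) (hf : ∀ v ∈ S, 0 ≤ f v)
    (hT : (#T : ℝ) ≤ #S / 2) (hST : ∀ v ∈ S \ T, c ≤ f v) :
    #S / 2 * c ≤ ∑ v ∈ S, f v := by
  have hcard : (#S : ℝ) / 2 ≤ #(S \ T) := by
    have : (#S : ℝ) ≤ #(S \ T) + #T := by exact_mod_cast card_le_card_sdiff_add_card
    linarith
  calc #S / 2 * c ≤ #(S \ T) * c := mul_le_mul_of_nonneg_right hcard hc
    _ ≤ ∑ v ∈ S \ T, f v := by simpa using card_nsmul_le_sum _ _ _ hST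
    _ ≤ ∑ v ∈ S, f v := sum_le_sum_of_subset_of_nonneg sdiff_subset fun v hv _ => hf v hv

theorem Finset.sum_sum_le_card_mul {ι : Type*} [Fintype ι] {f : ι → ι → ℝ}
    (hf : ∀ i j, 0 ≤ f i j) {d : ℝ} (hd : ∀ i, ∑ j, f i j ≤ d) (S : Finset ι) :
    ∑ i ∈ S, ∑ j ∈ S, f i j ≤ #S * d :=
  calc ∑ i ∈ S, ∑ j ∈ S, f i j ≤ ∑ i ∈ S, ∑ j, f i j :=
        sum_le_sum fun i _ => sum_le_sum_of_subset_of_nonneg (subset_univ S) fun j _ _ => hf i j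
    _ ≤ #S * d := by simpa using sum_le_sum fun i (_ : i ∈ S) => hd i

theorem Matrix.indicator_dotProduct_mulVec_indicator {n R : Type*} [Fintype n] [DecidableEq n]
    [NonAssocSemiring R] (M : Matrix n n R) (S T : Finset n) :
    (S : Set n).indicator 1 ⬝ᵥ (M *ᵥ (T : Set n).indicator 1) = ∑ v ∈ S, ∑ u ∈ T, M v u := by
  simp [dotProduct, mulVec, Set.indicator_apply, sum_ite_mem]

namespace Matrix.IsHermitian

variable {n : Type*} [Fintype n] [DecidableEq n] {A : Matrix n n ℝ} (hA : A.IsHermitian)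

theorem sum_eigenvectorBasis_dotProduct_mul (x y : n → ℝ) :
    ∑ i, (hA.eigenvectorBasis i ⬝ᵥ x) * (hA.eigenvectorBasis i ⬝ᵥ y) = x ⬝ᵥ y := by
  simpa [EuclideanSpace.inner_toLp_toLp, EuclideanSpace.inner_eq_star_dotProduct, dotProduct_comm]
    using hA.eigenvectorBasis.sum_inner_mul_inner (WithLp.toLp 2 x) (WithLp.toLp 2 y)

theorem eigenvectorBasis_dotProduct_mulVec (i : n) (y : n → ℝ) :
    hA.eigenvectorBasis i ⬝ᵥ (A *ᵥ y) = hA.eigenvalues i * (hA.eigenvectorBasis i ⬝ᵥ y) := by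
  have hAt : Aᵀ = A := by simpa [conjTranspose_eq_transpose_of_trivial] using hA.eq
  rw [dotProduct_mulVec, ← mulVec_transpose, hAt, mulVec_eigenvectorBasis, smul_dotProduct,
    smul_eq_mul]

theorem dotProduct_mulVec_self_eq_sum (x : n → ℝ) :
    x ⬝ᵥ (A *ᵥ x) = ∑ i, hA.eigenvalues i * (hA.eigenvectorBasis i ⬝ᵥ x) ^ 2 := by
  rw [← hA.sum_eigenvectorBasis_dotProduct_mul]
  refine sum_congr rfl fun i _ => ?_
  rw [eigenvectorBasis_dotProduct_mulVec]
  ring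

theorem eigenvectorBasis_dotProduct_eq_zero_of_mulVec_eq_self {y : n → ℝ} (hy : A *ᵥ y = y)
    {i : n} (hi : hA.eigenvalues i ≠ 1) : hA.eigenvectorBasis i ⬝ᵥ y = 0 := by
  have h := hA.eigenvectorBasis_dotProduct_mulVec i y
  rw [hy] at h
  have : (hA.eigenvalues i - 1) * (hA.eigenvectorBasis i ⬝ᵥ y) = 0 := by linarith
  exact (mul_eq_zero.1 this).resolve_left (sub_ne_zero.2 hi)

theorem eigenvectorBasis_dotProduct_sq_mul_dotProduct_self {y : n → ℝ} (hy : A *ᵥ y = y)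
    {i₀ : n} (hgap : ∀ i ≠ i₀, hA.eigenvalues i ≠ 1) (x : n → ℝ) :
    (hA.eigenvectorBasis i₀ ⬝ᵥ x) ^ 2 * (y ⬝ᵥ y) = (x ⬝ᵥ y) ^ 2 := by
  have hsingle (z : n → ℝ) :
      z ⬝ᵥ y = (hA.eigenvectorBasis i₀ ⬝ᵥ z) * (hA.eigenvectorBasis i₀ ⬝ᵥ y) := by
    rw [← hA.sum_eigenvectorBasis_dotProduct_mul]
    refine sum_eq_single i₀ (fun i _ hi => ?_) (by simp)
    rw [hA.eigenvectorBasis_dotProduct_eq_zero_of_mulVec_eq_self hy (hgap i hi), mul_zero]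
  rw [hsingle x, hsingle y]
  ring

theorem dotProduct_mulVec_self_le {i₀ : n} (hi₀ : hA.eigenvalues i₀ = 1) (h1 : A *ᵥ 1 = 1)
    {lam : ℝ} (hlam : lam < 1) (hgap : ∀ i ≠ i₀, hA.eigenvalues i ≤ lam) (x : n → ℝ) :
    x ⬝ᵥ (A *ᵥ x) ≤ (x ⬝ᵥ 1) ^ 2 / Fintype.card n
      + lam * (x ⬝ᵥ x - (x ⬝ᵥ 1) ^ 2 / Fintype.card n) := by
  set c := fun i => hA.eigenvectorBasis i ⬝ᵥ x
  have hcard : (0 : ℝ) < Fintype.card n := by exact_mod_cast Fintype.card_pos_iff.2 ⟨i₀⟩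
  have htop : c i₀ ^ 2 = (x ⬝ᵥ 1) ^ 2 / Fintype.card n := by
    rw [eq_div_iff hcard.ne', ← hA.eigenvectorBasis_dotProduct_sq_mul_dotProduct_self h1
      (fun i hi => ((hgap i hi).trans_lt hlam).ne) x]
    simp [c]
  have hnorm : x ⬝ᵥ x = c i₀ ^ 2 + ∑ i ∈ univ.erase i₀, c i ^ 2 := by
    rw [add_sum_erase univ (fun i => c i ^ 2) (mem_univ i₀),
      ← hA.sum_eigenvectorBasis_dotProduct_mul]
    simp only [c, sq]
  have hrest : ∑ i ∈ univ.erase i₀, hA.eigenvalues i * c i ^ 2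
      ≤ lam * ∑ i ∈ univ.erase i₀, c i ^ 2 := by
    rw [mul_sum]
    exact sum_le_sum fun i hi =>
      mul_le_mul_of_nonneg_right (hgap i (ne_of_mem_erase hi)) (sq_nonneg _)
  rw [hA.dotProduct_mulVec_self_eq_sum, ← add_sum_erase _ _ (mem_univ i₀), hi₀, one_mul, ← htop,
    hnorm]
  linarith

theorem sum_sum_le_of_eigenvalues_le {i₀ : n} (hi₀ : hA.eigenvalues i₀ = 1) (h1 : A *ᵥ 1 = 1)
    {lam : ℝ} (hlam0 : 0 ≤ lam) (hlam : lam < 1) (hgap : ∀ i ≠ i₀, hA.eigenvalues i ≤ lam)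
    (S : Finset n) :
    ∑ v ∈ S, ∑ u ∈ S, A v u ≤ (lam + #S / Fintype.card n) * #S := by
  have hquad := hA.dotProduct_mulVec_self_le hi₀ h1 hlam hgap ((S : Set n).indicator 1)
  have hx1 : (S : Set n).indicator 1 ⬝ᵥ (1 : n → ℝ) = #S := by
    simp [dotProduct, Set.indicator_apply]
  have hxx : (S : Set n).indicator 1 ⬝ᵥ (S : Set n).indicator (1 : n → ℝ) = #S := by
    simp [dotProduct, Set.indicator_apply]
  rw [indicator_dotProduct_mulVec_indicator, hx1, hxx] at hquad
  have : (0 : ℝ) ≤ #S ^ 2 / Fintype.card n := by positivity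
  calc _ ≤ _ := hquad
    _ ≤ (lam + #S / Fintype.card n) * #S := by rw [add_mul, div_mul_eq_mul_div, ← sq]; nlinarith

end Matrix.IsHermitian

theorem stmt18_general {V : Type} [Fintype V] [DecidableEq V] (Δ : ℕ) (hΔ : 0 < Δ)
    (W : V → V → ℕ) (hreg : ∀ i, ∑ j, W i j = Δ)
    (A : Matrix V V ℝ) (hA : ∀ i j, A i j = (W i j : ℝ) / Δ)
    (hHerm : A.IsHermitian) (lam δ : ℝ) (hlam0 : 0 ≤ lam) (hδ : 0 < δ)
    (hlam : ∃ i₀, hHerm.eigenvalues i₀ = 1 ∧ ∀ i, i ≠ i₀ → |hHerm.eigenvalues i| ≤ lam)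
    (hlamδ : lam < δ / 16)
    (S T : Finset V)
    (hS : (S.card : ℝ) ≤ lam * Fintype.card V)
    (hT : (T.card : ℝ) ≤ (S.card : ℝ) / 2)
    (hdeg : ∀ v ∈ S \ T, δ * Δ / 4 ≤ ∑ u ∈ S, (W v u : ℝ)) :
    S = ∅ := by
  by_contra hne
  obtain ⟨i₀, hi₀, hgap⟩ := hlam
  have hs : (0 : ℝ) < #S := by exact_mod_cast (nonempty_iff_ne_empty.2 hne).card_pos
  have hΔR : (0 : ℝ) < Δ := by exact_mod_cast hΔ
  have hrow (v : V) : ∑ u, (W v u : ℝ) = Δ := by exact_mod_cast hreg v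
  have hlower : #S / 2 * (δ * Δ / 4) ≤ ∑ v ∈ S, ∑ u ∈ S, (W v u : ℝ) :=
    card_div_two_mul_le_sum_of_le_on_sdiff (by positivity) (fun _ _ => by positivity) hT hdeg
  have hδ8 : δ ≤ 8 := by
    have hupper :=
      sum_sum_le_card_mul (fun v u => Nat.cast_nonneg (W v u)) (fun v => (hrow v).le) S
    have : δ * (#S * Δ) ≤ 8 * (#S * Δ) := by linarith
    exact le_of_mul_le_mul_right this (by positivity)
  have hA1 : A *ᵥ 1 = 1 := by
    ext v
    simp [mulVec, dotProduct, hA, ← sum_div, hrow, hΔR.ne']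
  have hmixing := hHerm.sum_sum_le_of_eigenvalues_le hi₀ hA1 hlam0 (by linarith)
    (fun i hi => (abs_le.1 (hgap i hi)).2) S
  simp only [hA, ← sum_div] at hmixing
  rw [div_le_iff₀ hΔR] at hmixing
  have hdensity : (#S : ℝ) / Fintype.card V ≤ lam :=
    div_le_of_le_mul₀ (Nat.cast_nonneg _) hlam0 hS
  nlinarith [mul_pos hs hΔR]

/-- let `G` be a `Δ`-regular multigraph (multiplicities `W`, normalized
adjacency matrix `A`) with spectral expansion `λ(G) ≤ lam` (all eigenvalues except one
copy of the top eigenvalue `1` are at most `lam` in absolute value, `0 ≤ lam`), where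
`lam < δ/16`. If `S, T ⊆ V` satisfy `|S| ≤ lam·|V|`, `|T| ≤ |S|/2`, and every
`v ∈ S \ T` has `W(v,S) ≥ δΔ/4`, then `S` is empty. -/
theorem stmt18 {V : Type} [Fintype V] [DecidableEq V] (Δ : ℕ) (hΔ : 0 < Δ)
    (W : V → V → ℕ) (hsym : ∀ i j, W i j = W j i) (hreg : ∀ i, ∑ j, W i j = Δ)
    (A : Matrix V V ℝ) (hA : ∀ i j, A i j = (W i j : ℝ) / Δ)
    (hHerm : A.IsHermitian) (lam δ : ℝ) (hlam0 : 0 ≤ lam) (hδ : 0 < δ)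
    (hlam : ∃ i₀, hHerm.eigenvalues i₀ = 1 ∧ ∀ i, i ≠ i₀ → |hHerm.eigenvalues i| ≤ lam)
    (hlamδ : lam < δ / 16)
    (S T : Finset V)
    (hS : (S.card : ℝ) ≤ lam * Fintype.card V)
    (hT : (T.card : ℝ) ≤ (S.card : ℝ) / 2)
    (hdeg : ∀ v ∈ S \ T, δ * Δ / 4 ≤ ∑ u ∈ S, (W v u : ℝ)) :
    S = ∅ :=
  stmt18_general Δ hΔ W hreg A hA hHerm lam δ hlam0 hδ hlam hlamδ S T hS hT hdeg
end
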